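/- Let q ≥ 2 and let x and y be random vectors in ℝ^d with E‖x‖₂^q < ∞ and E‖y‖₂^q < ∞. Then E| ‖x + y‖₂^q − ‖x‖₂^q − q‖x‖₂^{q−2} xᵀy | ≤ E(‖x‖₂ + ‖y‖₂)^q − E‖x‖₂^q − q E(‖x‖₂^{q−1}‖y‖₂). In fact the underlying pointwise inequality holds: for all x, y ∈ ℝ^d, | ‖x + y‖₂^q − ‖x‖₂^q − q‖x‖₂^{q−2} xᵀy | ≤ (‖x‖₂ + ‖y‖₂)^q − ‖x‖₂^q − q‖x‖₂^{q−1}‖y‖₂. -/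

import Mathlib

open MeasureTheory ProbabilityTheory Filter Topology Matrix
open Real Set

noncomputable section

/-- The Euclidean norm `‖v‖₂` of a vector `v ∈ ℝ^d`. -/
def euclNorm {d : ℕ} (v : Fin d → ℝ) : ℝ := Real.sqrt (∑ i, v i ^ 2)

lemma euclNorm_nonneg {d : ℕ} (v : Fin d → ℝ) : 0 ≤ euclNorm v := Real.sqrt_nonneg _

lemma euclNorm_sq {d : ℕ} (v : Fin d → ℝ) : euclNorm v ^ 2 = ∑ i, v i ^ 2 :=
  Real.sq_sqrt (Finset.sum_nonneg fun i _ => sq_nonneg _)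

lemma euclNorm_add_sq {d : ℕ} (u v : Fin d → ℝ) :
    euclNorm (u + v) ^ 2 = euclNorm u ^ 2 + 2 * (u ⬝ᵥ v) + euclNorm v ^ 2 := by
  simp only [euclNorm_sq, dotProduct, Pi.add_apply]
  rw [Finset.mul_sum, ← Finset.sum_add_distrib, ← Finset.sum_add_distrib]
  exact Finset.sum_congr rfl fun i _ => by ring

lemma dot_le_mul {d : ℕ} (u v : Fin d → ℝ) : u ⬝ᵥ v ≤ euclNorm u * euclNorm v :=
  Real.sum_mul_le_sqrt_mul_sqrt _ _ _

lemma abs_dot_le {d : ℕ} (u v : Fin d → ℝ) : |u ⬝ᵥ v| ≤ euclNorm u * euclNorm v := by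
  rw [abs_le]
  constructor
  · have h := Real.sum_mul_le_sqrt_mul_sqrt Finset.univ u (fun i => -v i)
    simp only [neg_sq] at h
    have : ∑ i, u i * -v i = -(u ⬝ᵥ v) := by simp [dotProduct, mul_neg]
    rw [this] at h
    simpa [euclNorm] using by linarith [h]
  · exact dot_le_mul u v

lemma euclNorm_eq_zero {d : ℕ} {u : Fin d → ℝ} (h : euclNorm u = 0) : u = 0 := by
  have h2 : ∑ i, u i ^ 2 = 0 := by
    have := euclNorm_sq u; rw [h] at this; simpa using this.symm
  funext i
  have := (Finset.sum_eq_zero_iff_of_nonneg (fun i _ => sq_nonneg (u i))).1 h2 i (Finset.mem_univ i)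
  exact pow_eq_zero_iff (by norm_num) |>.1 this



lemma midpoint_rpow {p x y : ℝ} (hp : 1 ≤ p) (hx : 0 ≤ x) (hy : 0 ≤ y) :
    ((x + y) / 2) ^ p ≤ ((x:ℝ) ^ p + y ^ p) / 2 := by
  have h := (convexOn_rpow hp).2 (Set.mem_Ici.2 hx) (Set.mem_Ici.2 hy)
    (by norm_num : (0:ℝ) ≤ 1/2) (by norm_num : (0:ℝ) ≤ 1/2) (by norm_num)
  simp only [smul_eq_mul] at h
  calc ((x + y) / 2) ^ p = (1/2 * x + 1/2 * y) ^ p := by ring_nf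
    _ ≤ 1/2 * x ^ p + 1/2 * y ^ p := h
    _ = (x ^ p + y ^ p) / 2 := by ring

lemma key_ineq {q : ℝ} (hq : 2 ≤ q) {a b : ℝ} (hb : 0 ≤ b) (hba : b ≤ a) :
    (a - b) ^ q + 2 * q * a ^ (q - 1) * b ≤ (a + b) ^ q := by
  have hq1 : (1:ℝ) ≤ q := by linarith
  have ha : 0 ≤ a := hb.trans hba
  set f : ℝ → ℝ := fun s => (a + s) ^ q - (a - s) ^ q - 2 * q * a ^ (q - 1) * s with hf
  have hd : ∀ s : ℝ, HasDerivAt f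
      (q * (a + s) ^ (q - 1) + q * (a - s) ^ (q - 1) - 2 * q * a ^ (q - 1)) s := by
    intro s
    have h1 : HasDerivAt (fun s : ℝ => a + s) 1 s := (hasDerivAt_id s).const_add a
    have h2 : HasDerivAt (fun s : ℝ => a - s) (-1) s := by
      exact (hasDerivAt_id' s).const_sub a
    have h1' := h1.rpow_const (p := q) (Or.inr hq1)
    have h2' := h2.rpow_const (p := q) (Or.inr hq1)
    have h3 : HasDerivAt (fun s : ℝ => 2 * q * a ^ (q - 1) * s)
        (2 * q * a ^ (q - 1)) s := by
      simpa using (hasDerivAt_id s).const_mul (2 * q * a ^ (q - 1))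
    have := (h1'.sub h2').sub h3
    exact this.congr_deriv (by ring)
  have hmono : MonotoneOn f (Set.Icc 0 a) := by
    apply monotoneOn_of_deriv_nonneg (convex_Icc 0 a)
    · exact fun s _ => ((hd s).continuousAt).continuousWithinAt
    · intro s _
      exact ((hd s).differentiableAt).differentiableWithinAt
    · intro s hs
      rw [interior_Icc] at hs
      rw [(hd s).deriv]
      have hsa : 0 ≤ a - s := by linarith [hs.2]
      have hs0 : 0 ≤ a + s := by linarith [hs.1.le]
      have hmid := midpoint_rpow (p := q - 1) (by linarith) hs0 hsa
      have : ((a + s + (a - s)) / 2) = a := by ring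
      rw [show (a + s + (a - s)) / 2 = a by ring] at hmid
      nlinarith [hmid]
  have h0 : f 0 = 0 := by simp [hf]
  have := hmono (Set.mem_Icc.2 ⟨le_refl 0, ha⟩) (Set.mem_Icc.2 ⟨hb, hba⟩) hb
  rw [h0] at this
  simp only [hf] at this
  linarith


lemma sq_rpow' {a : ℝ} (ha : 0 ≤ a) (p : ℝ) : ((a ^ 2 : ℝ)) ^ p = a ^ (2 * p) := by
  rw [← Real.rpow_two, ← Real.rpow_mul ha]

lemma tangent_rpow {p α s : ℝ} (hp : 1 ≤ p) (hα : 0 < α) (hs : 0 ≤ s) :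
    α ^ p + p * α ^ (p - 1) * (s - α) ≤ s ^ p := by
  have hx : (-1:ℝ) ≤ s / α - 1 := by
    have : 0 ≤ s / α := div_nonneg hs hα.le
    linarith
  have h := one_add_mul_self_le_rpow_one_add hx hp
  have hdiv : (1 + (s / α - 1)) = s / α := by ring
  rw [hdiv, Real.div_rpow hs hα.le] at h
  have hαp : 0 < α ^ p := Real.rpow_pos_of_pos hα p
  have h2 : α ^ p * (1 + p * (s / α - 1)) ≤ s ^ p := by
    calc α ^ p * (1 + p * (s / α - 1)) ≤ α ^ p * (s ^ p / α ^ p) :=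
          mul_le_mul_of_nonneg_left h hαp.le
      _ = s ^ p := by field_simp
  have h3 : α ^ p * (1 + p * (s / α - 1)) = α ^ p + p * α ^ (p - 1) * (s - α) := by
    rw [Real.rpow_sub_one hα.ne' p]
    field_simp
  linarith [h2, h3.symm.le]

lemma key_abs {q : ℝ} (hq : 2 ≤ q) {a b : ℝ} (ha : 0 ≤ a) (hb : 0 ≤ b) :
    |a - b| ^ q + 2 * q * a ^ (q - 1) * b ≤ (a + b) ^ q := by
  rcases le_total b a with h | h
  · rw [abs_of_nonneg (by linarith)]
    exact key_ineq hq hb h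
  · rw [abs_of_nonpos (by linarith), neg_sub]
    have h1 := key_ineq hq ha h
    have h2 : a ^ (q - 1) * b ≤ b ^ (q - 1) * a := by
      rcases eq_or_lt_of_le ha with h0 | h0
      · rw [← h0, Real.zero_rpow (by linarith : q - 1 ≠ 0)]
        simp
      · have hb0 : 0 < b := lt_of_lt_of_le h0 h
        have e1 : a ^ (q - 1) = a ^ (q - 2) * a := by
          rw [← Real.rpow_add_one h0.ne' (q - 2)]; ring_nf
        have e2 : b ^ (q - 1) = b ^ (q - 2) * b := by
          rw [← Real.rpow_add_one hb0.ne' (q - 2)]; ring_nf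
        have e3 : a ^ (q - 2) ≤ b ^ (q - 2) := Real.rpow_le_rpow ha h (by linarith)
        rw [e1, e2]
        calc a ^ (q - 2) * a * b ≤ b ^ (q - 2) * a * b := by
              apply mul_le_mul_of_nonneg_right (mul_le_mul_of_nonneg_right e3 ha) hb
          _ = b ^ (q - 2) * b * a := by ring
    calc (b - a) ^ q + 2 * q * a ^ (q - 1) * b
        ≤ (b - a) ^ q + 2 * q * b ^ (q - 1) * a := by nlinarith [h2, hq]
      _ ≤ (b + a) ^ q := h1
      _ = (a + b) ^ q := by ring_nf


lemma pointwise_ineq {d : ℕ} {q : ℝ} (hq : 2 ≤ q) (u v : Fin d → ℝ) :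
    |euclNorm (u + v) ^ q - euclNorm u ^ q - q * euclNorm u ^ (q - 2) * (u ⬝ᵥ v)|
      ≤ (euclNorm u + euclNorm v) ^ q - euclNorm u ^ q
        - q * euclNorm u ^ (q - 1) * euclNorm v := by
  have hq2 : (1:ℝ) ≤ q / 2 := by linarith
  rcases eq_or_lt_of_le (euclNorm_nonneg u) with ha0 | ha0
  · -- euclNorm u = 0
    have hu : u = 0 := euclNorm_eq_zero ha0.symm
    subst hu
    have h0 : euclNorm (0 : Fin d → ℝ) = 0 := by simp [euclNorm]
    rw [h0, zero_add]
    simp only [zero_dotProduct, mul_zero, sub_zero,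
      Real.zero_rpow (by linarith : q ≠ 0), Real.zero_rpow (by linarith : q - 1 ≠ 0)]
    rw [zero_add, zero_mul, sub_zero, abs_of_nonneg (Real.rpow_nonneg (euclNorm_nonneg v) q)]
  set a := euclNorm u with hadef
  set b := euclNorm v with hbdef
  set c := euclNorm (u + v) with hcdef
  set t := u ⬝ᵥ v with htdef
  have ha : 0 ≤ a := euclNorm_nonneg u
  have hb : 0 ≤ b := euclNorm_nonneg v
  have hc : 0 ≤ c := euclNorm_nonneg _
  have hc2 : c ^ 2 = a ^ 2 + 2 * t + b ^ 2 := euclNorm_add_sq u v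
  have habs : |t| ≤ a * b := abs_dot_le u v
  have e1 : ((a^2:ℝ))^(q/2) = a ^ q := by rw [sq_rpow' ha]; congr 1; ring
  have e2 : ((a^2:ℝ))^(q/2 - 1) = a ^ (q - 2) := by rw [sq_rpow' ha]; congr 1; ring
  have e3 : ((c^2:ℝ))^(q/2) = c ^ q := by rw [sq_rpow' hc]; congr 1; ring
  have e4 : a ^ (q - 2) * a = a ^ (q - 1) := by
    rw [← Real.rpow_add_one ha0.ne' (q - 2)]; ring_nf
  -- lower bound
  have hL : q / 2 * a ^ (q - 2) * b ^ 2 ≤ c ^ q - a ^ q - q * a ^ (q - 2) * t := by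
    have htan := tangent_rpow hq2 (pow_pos ha0 2) (sq_nonneg c)
    rw [e1, e2, e3] at htan
    have hcc : c ^ 2 - a ^ 2 = 2 * t + b ^ 2 := by rw [hc2]; ring
    rw [hcc] at htan
    nlinarith [htan]
  have hL0 : 0 ≤ q / 2 * a ^ (q - 2) * b ^ 2 := by positivity
  -- upper bound
  have hU : c ^ q - a ^ q - q * a ^ (q - 2) * t
      ≤ (a + b) ^ q - a ^ q - q * a ^ (q - 1) * b := by
    rcases eq_or_lt_of_le hb with hb0 | hb0
    · -- b = 0
      have hv : v = 0 := euclNorm_eq_zero (hbdef ▸ hb0.symm)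
      have htz : t = 0 := by rw [htdef, hv]; simp
      have hca : c = a := by rw [hcdef, hadef, hv, add_zero]
      rw [hca, htz, ← hb0]
      simp
    · set L : ℝ := (t + a * b) / (2 * (a * b)) with hLdef
      have hab : 0 < a * b := mul_pos ha0 hb0
      have hL0' : 0 ≤ L := by
        apply div_nonneg _ (by linarith)
        have := (abs_le.1 habs).1
        linarith
      have hL1 : L ≤ 1 := by
        rw [div_le_one (by linarith)]
        have := (abs_le.1 habs).2
        linarith
      have hteq : t = (2 * L - 1) * (a * b) := by
        rw [hLdef]; field_simp; ring
      have hcsq : c ^ 2 = L * (a + b) ^ 2 + (1 - L) * (a - b) ^ 2 := by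
        rw [hc2, hteq]; ring
      have hconv := (convexOn_rpow hq2).2 (Set.mem_Ici.2 (sq_nonneg (a + b)))
        (Set.mem_Ici.2 (sq_nonneg (a - b))) hL0' (by linarith : (0:ℝ) ≤ 1 - L)
        (by ring : L + (1 - L) = 1)
      simp only [smul_eq_mul] at hconv
      rw [← hcsq] at hconv
      have e5 : (((a + b) ^ 2 : ℝ)) ^ (q/2) = (a + b) ^ q := by
        rw [sq_rpow' (by linarith : (0:ℝ) ≤ a + b)]; congr 1; ring
      have e6 : (((a - b) ^ 2 : ℝ)) ^ (q/2) = |a - b| ^ q := by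
        rw [← sq_abs, sq_rpow' (abs_nonneg _)]; congr 1; ring
      rw [e3, e5, e6] at hconv
      -- hconv : c ^ q ≤ L * (a+b)^q + (1-L) * |a-b|^q
      have hkey := key_abs hq ha hb
      have hmul := mul_le_mul_of_nonneg_left hkey (by linarith : (0:ℝ) ≤ 1 - L)
      -- rewrite the dot term
      have e7 : q * a ^ (q - 2) * t = (2 * L - 1) * (q * a ^ (q - 1) * b) := by
        rw [hteq, ← e4]; ring
      rw [e7]
      nlinarith [hconv, hmul]
  rw [abs_of_nonneg (le_trans hL0 hL)]
  exact hU


lemma add_rpow_le_two_rpow_mul {a b q : ℝ} (ha : 0 ≤ a) (hb : 0 ≤ b) (hq : 0 ≤ q) :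
    (a + b) ^ q ≤ 2 ^ q * (a ^ q + b ^ q) := by
  have h1 : a + b ≤ 2 * max a b := by
    rcases le_total a b with h | h
    · rw [max_eq_right h]; linarith
    · rw [max_eq_left h]; linarith
  calc (a + b) ^ q ≤ (2 * max a b) ^ q :=
        Real.rpow_le_rpow (by positivity) h1 hq
    _ = 2 ^ q * (max a b) ^ q := Real.mul_rpow (by norm_num) (le_max_iff.2 (Or.inl ha))
    _ ≤ 2 ^ q * (a ^ q + b ^ q) := by
        apply mul_le_mul_of_nonneg_left _ (Real.rpow_nonneg (by norm_num) q)
        rcases le_total a b with h | h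
        · rw [max_eq_right h]; nlinarith [Real.rpow_nonneg ha q]
        · rw [max_eq_left h]; nlinarith [Real.rpow_nonneg hb q]

lemma rpow_mul_le_add {a b q : ℝ} (ha : 0 ≤ a) (hb : 0 ≤ b) (hq : 2 ≤ q) :
    a ^ (q - 1) * b ≤ a ^ q + b ^ q := by
  have hmul : ∀ c : ℝ, 0 ≤ c → c ^ (q - 1) * c = c ^ q := by
    intro c hc
    rcases eq_or_lt_of_le hc with h | h
    · rw [← h, Real.zero_rpow (by linarith : q - 1 ≠ 0), zero_mul,
        Real.zero_rpow (by linarith : q ≠ 0)]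
    · rw [← Real.rpow_add_one h.ne' (q - 1)]; ring_nf
  rcases le_total b a with h | h
  · calc a ^ (q - 1) * b ≤ a ^ (q - 1) * a :=
          mul_le_mul_of_nonneg_left h (Real.rpow_nonneg ha _)
      _ = a ^ q := hmul a ha
      _ ≤ a ^ q + b ^ q := by nlinarith [Real.rpow_nonneg hb q]
  · calc a ^ (q - 1) * b ≤ b ^ (q - 1) * b :=
          mul_le_mul_of_nonneg_right (Real.rpow_le_rpow ha h (by linarith)) hb
      _ = b ^ q := hmul b hb
      _ ≤ a ^ q + b ^ q := by nlinarith [Real.rpow_nonneg ha q]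

/-- Moment inequality, version (i).
For `q ≥ 2` and random vectors `x, y` in `ℝ^d` with finite `q`-th moments,
`E|‖x+y‖₂^q − ‖x‖₂^q − q‖x‖₂^{q−2} xᵀy|
   ≤ E(‖x‖₂+‖y‖₂)^q − E‖x‖₂^q − q E(‖x‖₂^{q−1}‖y‖₂)`,
and the underlying pointwise inequality holds for all vectors. -/
theorem statement_17
    {Ω : Type} [MeasurableSpace Ω] (μ : Measure Ω) [IsProbabilityMeasure μ]
    {d : ℕ} (q : ℝ) (hq : 2 ≤ q)
    (x y : Ω → Fin d → ℝ) (hx : Measurable x) (hy : Measurable y)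
    (hxq : Integrable (fun ω => euclNorm (x ω) ^ q) μ)
    (hyq : Integrable (fun ω => euclNorm (y ω) ^ q) μ) :
    (∫ ω, |euclNorm (x ω + y ω) ^ q - euclNorm (x ω) ^ q
          - q * euclNorm (x ω) ^ (q - 2) * (x ω ⬝ᵥ y ω)| ∂μ
        ≤ (∫ ω, (euclNorm (x ω) + euclNorm (y ω)) ^ q ∂μ)
          - (∫ ω, euclNorm (x ω) ^ q ∂μ)
          - q * ∫ ω, euclNorm (x ω) ^ (q - 1) * euclNorm (y ω) ∂μ) ∧
    ∀ u v : Fin d → ℝ,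
      |euclNorm (u + v) ^ q - euclNorm u ^ q - q * euclNorm u ^ (q - 2) * (u ⬝ᵥ v)|
        ≤ (euclNorm u + euclNorm v) ^ q - euclNorm u ^ q
          - q * euclNorm u ^ (q - 1) * euclNorm v := by
  have hpt := fun u v : Fin d → ℝ => pointwise_ineq hq u v
  refine ⟨?_, hpt⟩
  have hq0 : (0:ℝ) ≤ q := by linarith
  have hcont : Continuous (euclNorm (d := d)) :=
    Real.continuous_sqrt.comp (continuous_finset_sum _ fun i _ => (continuous_apply i).pow 2)
  have hA : Measurable fun ω => euclNorm (x ω) := hcont.measurable.comp hx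
  have hB : Measurable fun ω => euclNorm (y ω) := hcont.measurable.comp hy
  have hC : Measurable fun ω => euclNorm (x ω + y ω) := hcont.measurable.comp (hx.add hy)
  have hT : Measurable fun ω => x ω ⬝ᵥ y ω := by
    simp only [dotProduct]
    exact Finset.measurable_sum _ fun i _ =>
      ((measurable_pi_apply i).comp hx).mul ((measurable_pi_apply i).comp hy)
  have hrpow : ∀ p : ℝ, 0 ≤ p → Measurable fun s : ℝ => s ^ p := fun p hp =>
    (continuous_id.rpow_const fun _ => Or.inr hp).measurable
  -- integrability of (A+B)^q
  have habq : Integrable (fun ω => (euclNorm (x ω) + euclNorm (y ω)) ^ q) μ := by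
    apply Integrable.mono' ((hxq.add hyq).const_mul (2 ^ q))
    · exact ((hrpow q hq0).comp (hA.add hB)).aestronglyMeasurable
    · filter_upwards with ω
      rw [Real.norm_eq_abs, abs_of_nonneg (Real.rpow_nonneg
        (add_nonneg (euclNorm_nonneg _) (euclNorm_nonneg _)) q)]
      exact add_rpow_le_two_rpow_mul (euclNorm_nonneg _) (euclNorm_nonneg _) hq0
  -- integrability of A^{q-1} * B
  have hprod : Integrable (fun ω => euclNorm (x ω) ^ (q - 1) * euclNorm (y ω)) μ := by
    apply Integrable.mono' (hxq.add hyq)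
    · exact (((hrpow (q - 1) (by linarith)).comp hA).mul hB).aestronglyMeasurable
    · filter_upwards with ω
      rw [Real.norm_eq_abs, abs_of_nonneg (mul_nonneg
        (Real.rpow_nonneg (euclNorm_nonneg _) _) (euclNorm_nonneg _))]
      exact rpow_mul_le_add (euclNorm_nonneg _) (euclNorm_nonneg _) hq
  -- the dominating function
  have hg : Integrable (fun ω => (euclNorm (x ω) + euclNorm (y ω)) ^ q
      - euclNorm (x ω) ^ q - q * (euclNorm (x ω) ^ (q - 1) * euclNorm (y ω))) μ :=
    (habq.sub hxq).sub (hprod.const_mul q)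
  have hle : ∀ ω, |euclNorm (x ω + y ω) ^ q - euclNorm (x ω) ^ q
      - q * euclNorm (x ω) ^ (q - 2) * (x ω ⬝ᵥ y ω)|
      ≤ (euclNorm (x ω) + euclNorm (y ω)) ^ q - euclNorm (x ω) ^ q
        - q * (euclNorm (x ω) ^ (q - 1) * euclNorm (y ω)) := fun ω => by
    have := hpt (x ω) (y ω)
    rw [← mul_assoc]
    exact this
  have hf : Integrable (fun ω => |euclNorm (x ω + y ω) ^ q - euclNorm (x ω) ^ q
      - q * euclNorm (x ω) ^ (q - 2) * (x ω ⬝ᵥ y ω)|) μ := by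
    apply Integrable.mono' hg
    · refine (Measurable.abs ?_).aestronglyMeasurable
      exact (((hrpow q hq0).comp hC).sub ((hrpow q hq0).comp hA)).sub
        ((measurable_const.mul ((hrpow (q - 2) (by linarith)).comp hA)).mul hT)
    · filter_upwards with ω
      rw [Real.norm_eq_abs, abs_abs]
      exact hle ω
  calc ∫ ω, |euclNorm (x ω + y ω) ^ q - euclNorm (x ω) ^ q
        - q * euclNorm (x ω) ^ (q - 2) * (x ω ⬝ᵥ y ω)| ∂μ
      ≤ ∫ ω, ((euclNorm (x ω) + euclNorm (y ω)) ^ q - euclNorm (x ω) ^ q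
        - q * (euclNorm (x ω) ^ (q - 1) * euclNorm (y ω))) ∂μ :=
        integral_mono hf hg hle
    _ = (∫ ω, (euclNorm (x ω) + euclNorm (y ω)) ^ q ∂μ)
          - (∫ ω, euclNorm (x ω) ^ q ∂μ)
          - q * ∫ ω, euclNorm (x ω) ^ (q - 1) * euclNorm (y ω) ∂μ := by
        have h1 : Integrable (fun ω => (euclNorm (x ω) + euclNorm (y ω)) ^ q
            - euclNorm (x ω) ^ q) μ := habq.sub hxq
        have h2 : Integrable (fun ω => q * (euclNorm (x ω) ^ (q - 1) * euclNorm (y ω))) μ :=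
          hprod.const_mul q
        rw [integral_sub h1 h2, integral_sub habq hxq, integral_const_mul q _]

end
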